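/- arXiv:quant-ph/0312225 — 4 statements merged into one kernel-verified Lean document; each statement's English description precedes it below -/
import Mathlib

section
/- Let U be a unitary 2×2 matrix and let |ψ⟩, |φ⟩ be nonzero vectors in C². The output state of the controlled-U gate applied to |ψ⟩⊗|φ⟩ is entangled (i.e., not expressible as a tensor product of two vectors in C²) if and only if |φ⟩ is not an eigenvector of U and |ψ⟩ = a|0⟩ + b|1⟩ with a ≠ 0 and b ≠ 0. -/
open Matrix Kronecker Complex

noncomputable section

def X : Matrix (Fin 2) (Fin 2) ℂ := !![0, 1; 1, 0]
def Z : Matrix (Fin 2) (Fin 2) ℂ := !![1, 0; 0, -1]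
def e0 : Matrix (Fin 2) (Fin 2) ℂ := !![1, 0; 0, 0]
def e1 : Matrix (Fin 2) (Fin 2) ℂ := !![0, 0; 0, 1]

/-- CNOT on two qubits, control on the first factor. -/
def CNOT : Matrix (Fin 2 × Fin 2) (Fin 2 × Fin 2) ℂ := e0 ⊗ₖ 1 + e1 ⊗ₖ X

/-- Controlled-`U` gate, control on the first factor. -/
def CU (U : Matrix (Fin 2) (Fin 2) ℂ) : Matrix (Fin 2 × Fin 2) (Fin 2 × Fin 2) ℂ :=
  e0 ⊗ₖ 1 + e1 ⊗ₖ U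

/-- Tensor product of two single-qubit state vectors. -/
def vecTensor (u w : Fin 2 → ℂ) : Fin 2 × Fin 2 → ℂ := fun p => u p.1 * w p.2

/-- A two-qubit state is entangled if it is not a tensor product of two vectors. -/
def Entangled (v : Fin 2 × Fin 2 → ℂ) : Prop := ¬ ∃ u w : Fin 2 → ℂ, v = vecTensor u w

lemma funext_two {v w : Fin 2 × Fin 2 → ℂ} (h00 : v (0,0) = w (0,0))
    (h01 : v (0,1) = w (0,1)) (h10 : v (1,0) = w (1,0)) (h11 : v (1,1) = w (1,1)) :
    v = w := by
  funext p
  obtain ⟨i, j⟩ := p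
  fin_cases i <;> fin_cases j
  · exact h00
  · exact h01
  · exact h10
  · exact h11

lemma funext_one {v w : Fin 2 → ℂ} (h0 : v 0 = w 0) (h1 : v 1 = w 1) : v = w := by
  funext i
  fin_cases i
  · exact h0
  · exact h1

lemma CU_apply (U : Matrix (Fin 2) (Fin 2) ℂ) (ψ φ : Fin 2 → ℂ) (j : Fin 2) :
    (CU U).mulVec (vecTensor ψ φ) (0, j) = ψ 0 * φ j ∧
    (CU U).mulVec (vecTensor ψ φ) (1, j) = ψ 1 * U.mulVec φ j := by
  constructor <;> fin_cases j <;>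
  · simp [CU, mulVec, dotProduct, Fintype.sum_prod_type, Fin.sum_univ_two, e0, e1,
      vecTensor, Matrix.one_apply]
    try ring

/-- A 2x2 "matrix" of amplitudes is a product state iff its determinant vanishes. -/
lemma prod_iff (v : Fin 2 × Fin 2 → ℂ) :
    (∃ u w : Fin 2 → ℂ, v = vecTensor u w) ↔
      v (0,0) * v (1,1) = v (0,1) * v (1,0) := by
  constructor
  · rintro ⟨u, w, rfl⟩; simp [vecTensor]; ring
  · intro h
    by_cases ha : v (0,0) = 0
    · by_cases hb : v (0,1) = 0
      · refine ⟨![0, 1], ![v (1,0), v (1,1)], funext_two ?_ ?_ ?_ ?_⟩ <;>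
          simp [vecTensor, -Prod.mk_zero_zero, -Prod.mk_one_one]
        · exact ha
        · exact hb
      · have h10 : v (1,0) = 0 := by
          have h' := h
          rw [ha, zero_mul] at h'
          exact (mul_eq_zero.mp h'.symm).resolve_left hb
        refine ⟨![1, v (1,1) / v (0,1)], ![v (0,0), v (0,1)], funext_two ?_ ?_ ?_ ?_⟩ <;>
          simp [vecTensor, -Prod.mk_zero_zero, -Prod.mk_one_one]
        · rw [ha, mul_zero]; exact h10
        · rw [div_mul_cancel₀ _ hb]
    · refine ⟨![1, v (1,0) / v (0,0)], ![v (0,0), v (0,1)], funext_two ?_ ?_ ?_ ?_⟩ <;>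
        simp [vecTensor, -Prod.mk_zero_zero, -Prod.mk_one_one]
      · rw [div_mul_cancel₀ _ ha]
      · rw [div_mul_eq_mul_div, eq_div_iff ha]; linear_combination h

lemma eigen_iff (U : Matrix (Fin 2) (Fin 2) ℂ) (φ : Fin 2 → ℂ) (hφ : φ ≠ 0) :
    (∃ c : ℂ, U.mulVec φ = c • φ) ↔
      φ 0 * U.mulVec φ 1 = φ 1 * U.mulVec φ 0 := by
  constructor
  · rintro ⟨c, hc⟩
    have h0 := congrFun hc 0
    have h1 := congrFun hc 1
    simp only [Pi.smul_apply, smul_eq_mul] at h0 h1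
    rw [h0, h1]; ring
  · intro h
    by_cases ha : φ 0 = 0
    · have hb : φ 1 ≠ 0 := by
        intro hb
        exact hφ (funext_one (by simpa using ha) (by simpa using hb))
      have hx : U.mulVec φ 0 = 0 := by
        rw [ha, zero_mul] at h
        exact (mul_eq_zero.mp h.symm).resolve_left hb
      refine ⟨U.mulVec φ 1 / φ 1, funext_one ?_ ?_⟩ <;>
        simp only [Pi.smul_apply, smul_eq_mul]
      · rw [ha, mul_zero]; exact hx
      · rw [div_mul_cancel₀ _ hb]
    · refine ⟨U.mulVec φ 0 / φ 0, funext_one ?_ ?_⟩ <;>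
        simp only [Pi.smul_apply, smul_eq_mul]
      · rw [div_mul_cancel₀ _ ha]
      · rw [div_mul_eq_mul_div, eq_div_iff ha]; linear_combination h

/-- The output of a controlled-U gate on |ψ⟩⊗|φ⟩ is entangled iff |φ⟩ is not an
eigenvector of U and both amplitudes of |ψ⟩ are nonzero. -/
theorem controlledU_entangles_iff (U : Matrix (Fin 2) (Fin 2) ℂ)
    (hU : U ∈ Matrix.unitaryGroup (Fin 2) ℂ)
    (ψ φ : Fin 2 → ℂ) (hψ : ψ ≠ 0) (hφ : φ ≠ 0) :
    Entangled ((CU U).mulVec (vecTensor ψ φ)) ↔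
      (¬ ∃ c : ℂ, U.mulVec φ = c • φ) ∧ ψ 0 ≠ 0 ∧ ψ 1 ≠ 0 := by
  rw [Entangled, prod_iff, eigen_iff U φ hφ,
    (CU_apply U ψ φ 0).1, (CU_apply U ψ φ 1).1,
    (CU_apply U ψ φ 0).2, (CU_apply U ψ φ 1).2]
  constructor
  · intro h
    refine ⟨fun hc => h (by linear_combination ψ 0 * ψ 1 * hc),
      fun h0 => h (by rw [h0]; ring), fun h1 => h (by rw [h1]; ring)⟩
  · rintro ⟨hc, h0, h1⟩ h
    apply hc
    have h' : ψ 0 * ψ 1 * (φ 0 * U.mulVec φ 1) = ψ 0 * ψ 1 * (φ 1 * U.mulVec φ 0) := by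
      linear_combination h
    exact mul_left_cancel₀ (mul_ne_zero h0 h1) h'
end
end

section
/- Suppose single qubit unitaries A₁, A₂, A₃, B₁, B₂, B₃ and a unitary 2×2 matrix U satisfy (A₃⊗B₃)·CNOT·(A₂⊗B₂)·CNOT·(A₁⊗B₁) = controlled-U (as 4×4 matrices, with CNOT controlled by the first qubit). If A₁ is sparse (diagonal or antidiagonal), then A₂ and A₃ are also sparse. -/
open Matrix Kronecker Complex

set_option maxRecDepth 4000

noncomputable section

/-- A 2×2 matrix is sparse if it is diagonal or antidiagonal. -/
def Sparse (A : Matrix (Fin 2) (Fin 2) ℂ) : Prop :=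
  (A 0 1 = 0 ∧ A 1 0 = 0) ∨ (A 0 0 = 0 ∧ A 1 1 = 0)

lemma Xsq : X * X = 1 := by
  ext i j
  fin_cases i <;> fin_cases j <;>
    simp [X, Matrix.mul_apply, Fin.sum_univ_two, Matrix.one_apply]

lemma isUnitX : IsUnit X := ⟨⟨X, X, Xsq, Xsq⟩, rfl⟩

lemma isUnit_of_unitary {M : Matrix (Fin 2) (Fin 2) ℂ}
    (hM : M ∈ Matrix.unitaryGroup (Fin 2) ℂ) : IsUnit M :=
  ⟨⟨M, star M, Matrix.mem_unitaryGroup_iff.mp hM, Matrix.mem_unitaryGroup_iff'.mp hM⟩, rfl⟩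

lemma cancel (c₀ c₁ : ℂ) (R P : Matrix (Fin 2) (Fin 2) ℂ) (hR : IsUnit R) (hP : IsUnit P)
    (h : c₀ • (R * P) + c₁ • (R * X * P) = 0) : c₀ = 0 ∧ c₁ = 0 := by
  have h2 : R * ((c₀ • 1 + c₁ • X) * P) = R * 0 := by
    rw [mul_zero, ← h, Matrix.add_mul, Matrix.mul_add, Matrix.smul_mul, Matrix.smul_mul,
      Matrix.mul_smul, Matrix.mul_smul, Matrix.one_mul, Matrix.mul_assoc]
  have h3 : (c₀ • 1 + c₁ • X) * P = 0 := hR.mul_left_cancel h2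
  have h4 : (c₀ • (1 : Matrix (Fin 2) (Fin 2) ℂ) + c₁ • X) = 0 := by
    have := h3.trans (Matrix.zero_mul P).symm
    exact hP.mul_right_cancel this
  constructor
  · have := congrFun (congrFun h4 0) 0
    simpa [X, Matrix.one_apply] using this
  · have := congrFun (congrFun h4 0) 1
    simpa [X, Matrix.one_apply] using this

section uni
variable {M : Matrix (Fin 2) (Fin 2) ℂ} (hM : M ∈ Matrix.unitaryGroup (Fin 2) ℂ)

include hM in
lemma ueq1 : ∀ i j, M i 0 * star (M j 0) + M i 1 * star (M j 1)
    = (1 : Matrix (Fin 2) (Fin 2) ℂ) i j := by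
  intro i j
  have := congrFun (congrFun (Matrix.mem_unitaryGroup_iff.mp hM) i) j
  simpa [Matrix.mul_apply, Fin.sum_univ_two, Matrix.star_apply] using this

include hM in
lemma ueq2 : ∀ i j, star (M 0 i) * M 0 j + star (M 1 i) * M 1 j
    = (1 : Matrix (Fin 2) (Fin 2) ℂ) i j := by
  intro i j
  have := congrFun (congrFun (Matrix.mem_unitaryGroup_iff'.mp hM) i) j
  simpa [Matrix.mul_apply, Fin.sum_univ_two, Matrix.star_apply] using this

include hM in
lemma u01 (h : M 0 1 = 0) : M 1 0 = 0 ∧ M 0 0 ≠ 0 ∧ M 1 1 ≠ 0 := by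
  have e00 := ueq1 hM 0 0
  have e11 := ueq2 hM 1 1
  have e01 := ueq2 hM 0 1
  rw [h] at e00 e11 e01
  simp [Matrix.one_apply] at e00 e11 e01
  have h11 : M 1 1 ≠ 0 := by intro hz; rw [hz] at e11; simp at e11
  have h00 : M 0 0 ≠ 0 := by intro hz; rw [hz] at e00; simp at e00
  refine ⟨?_, h00, h11⟩
  rcases e01 with h' | h'
  · exact h'
  · exact absurd h' h11

include hM in
lemma u10 (h : M 1 0 = 0) : M 0 1 = 0 ∧ M 0 0 ≠ 0 ∧ M 1 1 ≠ 0 := by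
  have e00 := ueq2 hM 0 0
  have e11 := ueq1 hM 1 1
  have e01 := ueq1 hM 0 1
  rw [h] at e00 e11 e01
  simp [Matrix.one_apply] at e00 e11 e01
  have h11 : M 1 1 ≠ 0 := by intro hz; rw [hz] at e11; simp at e11
  have h00 : M 0 0 ≠ 0 := by intro hz; rw [hz] at e00; simp at e00
  refine ⟨?_, h00, h11⟩
  rcases e01 with h' | h'
  · exact h'
  · exact absurd h' h11

include hM in
lemma u00 (h : M 0 0 = 0) : M 1 1 = 0 ∧ M 0 1 ≠ 0 ∧ M 1 0 ≠ 0 := by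
  have e00a := ueq1 hM 0 0
  have e00b := ueq2 hM 0 0
  have e01 := ueq2 hM 0 1
  rw [h] at e00a e00b e01
  simp [Matrix.one_apply] at e00a e00b e01
  have h01 : M 0 1 ≠ 0 := by intro hz; rw [hz] at e00a; simp at e00a
  have h10 : M 1 0 ≠ 0 := by intro hz; rw [hz] at e00b; simp at e00b
  refine ⟨?_, h01, h10⟩
  rcases e01 with h' | h'
  · exact absurd h' h10
  · exact h'

include hM in
lemma u11 (h : M 1 1 = 0) : M 0 0 = 0 ∧ M 0 1 ≠ 0 ∧ M 1 0 ≠ 0 := by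
  have e11a := ueq1 hM 1 1
  have e11b := ueq2 hM 1 1
  have e01 := ueq2 hM 0 1
  rw [h] at e11a e11b e01
  simp [Matrix.one_apply] at e11a e11b e01
  have h10 : M 1 0 ≠ 0 := by intro hz; rw [hz] at e11a; simp at e11a
  have h01 : M 0 1 ≠ 0 := by intro hz; rw [hz] at e11b; simp at e11b
  refine ⟨?_, h01, h10⟩
  rcases e01 with h' | h'
  · exact h'
  · exact absurd h' h01

end uni

lemma combineD {A₂ A₃ : Matrix (Fin 2) (Fin 2) ℂ}
    (hA₂ : A₂ ∈ Matrix.unitaryGroup (Fin 2) ℂ) (hA₃ : A₃ ∈ Matrix.unitaryGroup (Fin 2) ℂ)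
    (h1 : A₃ 0 0 * A₂ 0 1 = 0) (h2 : A₃ 0 1 * A₂ 1 1 = 0)
    (h3 : A₃ 1 0 * A₂ 0 0 = 0) : Sparse A₂ ∧ Sparse A₃ := by
  by_cases h : A₃ 0 0 = 0
  · obtain ⟨h11, h01ne, h10ne⟩ := u00 hA₃ h
    have hA211 : A₂ 1 1 = 0 := (mul_eq_zero.mp h2).resolve_left h01ne
    obtain ⟨hA200, _, _⟩ := u11 hA₂ hA211
    exact ⟨Or.inr ⟨hA200, hA211⟩, Or.inr ⟨h, h11⟩⟩
  · have hA201 : A₂ 0 1 = 0 := (mul_eq_zero.mp h1).resolve_left h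
    obtain ⟨hA210, hA200ne, _⟩ := u01 hA₂ hA201
    have hA310 : A₃ 1 0 = 0 := (mul_eq_zero.mp h3).resolve_right hA200ne
    obtain ⟨hA301, _, _⟩ := u10 hA₃ hA310
    exact ⟨Or.inl ⟨hA201, hA210⟩, Or.inl ⟨hA301, hA310⟩⟩

lemma combineA {A₂ A₃ : Matrix (Fin 2) (Fin 2) ℂ}
    (hA₂ : A₂ ∈ Matrix.unitaryGroup (Fin 2) ℂ) (hA₃ : A₃ ∈ Matrix.unitaryGroup (Fin 2) ℂ)
    (h1 : A₃ 0 0 * A₂ 0 0 = 0) (h2 : A₃ 0 1 * A₂ 1 0 = 0)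
    (h3 : A₃ 1 0 * A₂ 0 1 = 0) : Sparse A₂ ∧ Sparse A₃ := by
  by_cases h : A₃ 0 0 = 0
  · obtain ⟨h11, h01ne, h10ne⟩ := u00 hA₃ h
    have hA210 : A₂ 1 0 = 0 := (mul_eq_zero.mp h2).resolve_left h01ne
    obtain ⟨hA201, _, _⟩ := u10 hA₂ hA210
    exact ⟨Or.inl ⟨hA201, hA210⟩, Or.inr ⟨h, h11⟩⟩
  · have hA200 : A₂ 0 0 = 0 := (mul_eq_zero.mp h1).resolve_left h
    obtain ⟨hA211, hA201ne, _⟩ := u00 hA₂ hA200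
    have hA310 : A₃ 1 0 = 0 := (mul_eq_zero.mp h3).resolve_right hA201ne
    obtain ⟨hA301, _, _⟩ := u10 hA₃ hA310
    exact ⟨Or.inr ⟨hA200, hA211⟩, Or.inl ⟨hA301, hA310⟩⟩

/-- In a two-CNOT realization of a controlled-U gate, if A₁ is sparse then A₂ and A₃
are sparse as well. -/
theorem sparse_propagates (U A₁ A₂ A₃ B₁ B₂ B₃ : Matrix (Fin 2) (Fin 2) ℂ)
    (hU : U ∈ Matrix.unitaryGroup (Fin 2) ℂ)
    (hA₁ : A₁ ∈ Matrix.unitaryGroup (Fin 2) ℂ) (hA₂ : A₂ ∈ Matrix.unitaryGroup (Fin 2) ℂ)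
    (hA₃ : A₃ ∈ Matrix.unitaryGroup (Fin 2) ℂ) (hB₁ : B₁ ∈ Matrix.unitaryGroup (Fin 2) ℂ)
    (hB₂ : B₂ ∈ Matrix.unitaryGroup (Fin 2) ℂ) (hB₃ : B₃ ∈ Matrix.unitaryGroup (Fin 2) ℂ)
    (hcirc : (A₃ ⊗ₖ B₃) * CNOT * (A₂ ⊗ₖ B₂) * CNOT * (A₁ ⊗ₖ B₁) = CU U)
    (hsp : Sparse A₁) : Sparse A₂ ∧ Sparse A₃ := by
  have hB3u : IsUnit B₃ := isUnit_of_unitary hB₃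
  have hPu : IsUnit (B₂ * X * B₁) :=
    ((isUnit_of_unitary hB₂).mul isUnitX).mul (isUnit_of_unitary hB₁)
  have hQu : IsUnit (B₂ * B₁) := (isUnit_of_unitary hB₂).mul (isUnit_of_unitary hB₁)
  rcases hsp with ⟨h01, h10⟩ | ⟨h00, h11⟩
  · -- A₁ diagonal
    obtain ⟨-, hA100ne, hA111ne⟩ := u01 hA₁ h01
    have Hm1 : (A₃ 0 0 * A₂ 0 1 * A₁ 1 1) • (B₃ * (B₂ * X * B₁)) +
        (A₃ 0 1 * A₂ 1 1 * A₁ 1 1) • (B₃ * X * (B₂ * X * B₁)) = 0 := by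
      ext b d
      have h := congrFun (congrFun hcirc (0, b)) (1, d)
      simp [CNOT, CU, e0, e1, X, Matrix.mul_apply, Fintype.sum_prod_type, Fin.sum_univ_two,
        Matrix.one_apply, Matrix.kroneckerMap_apply, h01] at h
      simp [X, Matrix.mul_apply, Fin.sum_univ_two]
      linear_combination h
    have Hm2 : (A₃ 1 0 * A₂ 0 0 * A₁ 0 0) • (B₃ * (B₂ * B₁)) +
        (A₃ 1 1 * A₂ 1 0 * A₁ 0 0) • (B₃ * X * (B₂ * B₁)) = 0 := by
      ext b d
      have h := congrFun (congrFun hcirc (1, b)) (0, d)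
      simp [CNOT, CU, e0, e1, X, Matrix.mul_apply, Fintype.sum_prod_type, Fin.sum_univ_two,
        Matrix.one_apply, Matrix.kroneckerMap_apply, h10] at h
      simp [X, Matrix.mul_apply, Fin.sum_univ_two]
      linear_combination h
    obtain ⟨c1, c2⟩ := cancel _ _ _ _ hB3u hPu Hm1
    obtain ⟨c3, c4⟩ := cancel _ _ _ _ hB3u hQu Hm2
    have e1' : A₃ 0 0 * A₂ 0 1 = 0 := (mul_eq_zero.mp c1).resolve_right hA111ne
    have e2' : A₃ 0 1 * A₂ 1 1 = 0 := (mul_eq_zero.mp c2).resolve_right hA111ne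
    have e3' : A₃ 1 0 * A₂ 0 0 = 0 := (mul_eq_zero.mp c3).resolve_right hA100ne
    exact combineD hA₂ hA₃ e1' e2' e3'
  · -- A₁ antidiagonal
    obtain ⟨-, hA101ne, hA110ne⟩ := u00 hA₁ h00
    have Hm1 : (A₃ 0 0 * A₂ 0 0 * A₁ 0 1) • (B₃ * (B₂ * B₁)) +
        (A₃ 0 1 * A₂ 1 0 * A₁ 0 1) • (B₃ * X * (B₂ * B₁)) = 0 := by
      ext b d
      have h := congrFun (congrFun hcirc (0, b)) (1, d)
      simp [CNOT, CU, e0, e1, X, Matrix.mul_apply, Fintype.sum_prod_type, Fin.sum_univ_two,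
        Matrix.one_apply, Matrix.kroneckerMap_apply, h11] at h
      simp [X, Matrix.mul_apply, Fin.sum_univ_two]
      linear_combination h
    have Hm2 : (A₃ 1 0 * A₂ 0 1 * A₁ 1 0) • (B₃ * (B₂ * X * B₁)) +
        (A₃ 1 1 * A₂ 1 1 * A₁ 1 0) • (B₃ * X * (B₂ * X * B₁)) = 0 := by
      ext b d
      have h := congrFun (congrFun hcirc (1, b)) (0, d)
      simp [CNOT, CU, e0, e1, X, Matrix.mul_apply, Fintype.sum_prod_type, Fin.sum_univ_two,
        Matrix.one_apply, Matrix.kroneckerMap_apply, h00] at h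
      simp [X, Matrix.mul_apply, Fin.sum_univ_two]
      linear_combination h
    obtain ⟨c1, c2⟩ := cancel _ _ _ _ hB3u hQu Hm1
    obtain ⟨c3, c4⟩ := cancel _ _ _ _ hB3u hPu Hm2
    have e1' : A₃ 0 0 * A₂ 0 0 = 0 := (mul_eq_zero.mp c1).resolve_right hA101ne
    have e2' : A₃ 0 1 * A₂ 1 0 = 0 := (mul_eq_zero.mp c2).resolve_right hA101ne
    have e3' : A₃ 1 0 * A₂ 0 1 = 0 := (mul_eq_zero.mp c3).resolve_right hA110ne
    exact combineA hA₂ hA₃ e1' e2' e3'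
end
end

section
/- Suppose single qubit unitaries A₁, A₂, A₃, B₁, B₂, B₃ and a unitary 2×2 matrix U satisfy (A₃⊗B₃)·CNOT·(A₂⊗B₂)·CNOT·(A₁⊗B₁) = controlled-U, where U is not a scalar multiple of the identity. If A₁ is not sparse, then neither A₂ nor A₃ is sparse. -/
open Matrix Kronecker Complex

noncomputable section

/-! ### Auxiliary lemmas -/

abbrev M2 := Matrix (Fin 2) (Fin 2) ℂ

lemma quint00 (M N K : M2) (p q : Fin 2) : (M*e0*N*e0*K) p q = M p 0 * N 0 0 * K 0 q := by
  simp [e0, Matrix.mul_apply, Fin.sum_univ_succ]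
lemma quint01 (M N K : M2) (p q : Fin 2) : (M*e0*N*e1*K) p q = M p 0 * N 0 1 * K 1 q := by
  simp [e0, e1, Matrix.mul_apply, Fin.sum_univ_succ]
lemma quint10 (M N K : M2) (p q : Fin 2) : (M*e1*N*e0*K) p q = M p 1 * N 1 0 * K 0 q := by
  simp [e0, e1, Matrix.mul_apply, Fin.sum_univ_succ]
lemma quint11 (M N K : M2) (p q : Fin 2) : (M*e1*N*e1*K) p q = M p 1 * N 1 1 * K 1 q := by
  simp [e1, Matrix.mul_apply, Fin.sum_univ_succ]

/-- The master block equation extracted from the circuit identity. -/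
lemma master (U A₁ A₂ A₃ B₁ B₂ B₃ : M2)
    (hcirc : (A₃ ⊗ₖ B₃) * CNOT * (A₂ ⊗ₖ B₂) * CNOT * (A₁ ⊗ₖ B₁) = CU U) (p q : Fin 2) :
    (A₃ p 0 * A₂ 0 0 * A₁ 0 q) • (B₃*B₂*B₁) + (A₃ p 0 * A₂ 0 1 * A₁ 1 q) • (B₃*B₂*X*B₁)
      + (A₃ p 1 * A₂ 1 0 * A₁ 0 q) • (B₃*X*B₂*B₁) + (A₃ p 1 * A₂ 1 1 * A₁ 1 q) • (B₃*X*B₂*X*B₁)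
      = e0 p q • (1:M2) + e1 p q • U := by
  have expand : (A₃*e0*A₂*e0*A₁) ⊗ₖ (B₃*B₂*B₁) + (A₃*e0*A₂*e1*A₁) ⊗ₖ (B₃*B₂*X*B₁)
      + (A₃*e1*A₂*e0*A₁) ⊗ₖ (B₃*X*B₂*B₁) + (A₃*e1*A₂*e1*A₁) ⊗ₖ (B₃*X*B₂*X*B₁)
      = CU U := by
    rw [← hcirc]
    simp only [CNOT, Matrix.mul_add, Matrix.add_mul, ← Matrix.mul_kronecker_mul,
      Matrix.mul_one, Matrix.one_mul]
    abel
  ext i j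
  have h := congrFun (congrFun expand (p, i)) (q, j)
  simp only [CU, Matrix.add_apply, Matrix.kroneckerMap_apply] at h
  rw [quint00, quint01, quint10, quint11] at h
  simp only [Matrix.add_apply, Matrix.smul_apply, smul_eq_mul]
  linear_combination h

lemma one_ne_zero_M2 : (1 : M2) ≠ 0 := by
  intro h
  have := congrFun (congrFun h 0) 0
  simp at this

lemma key1 (P Q U : M2) (a b g d x y z w : ℂ) (hx : x ≠ 0) (hy : y ≠ 0)
    (h1 : (a*x) • P + (b*y) • Q = 0)
    (h2 : (a*z) • P + (b*w) • Q = 1)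
    (h3 : (g*x) • P + (d*y) • Q = U) : ∃ c : ℂ, U = c • (1 : M2) := by
  by_cases hb : b = 0
  · subst hb
    simp only [zero_mul, zero_smul, add_zero] at h1 h2
    rcases smul_eq_zero.mp h1 with h' | h'
    · rcases mul_eq_zero.mp h' with h'' | h''
      · rw [h'', zero_mul, zero_smul] at h2
        exact absurd h2.symm one_ne_zero_M2
      · exact absurd h'' hx
    · rw [h', smul_zero] at h2
      exact absurd h2.symm one_ne_zero_M2
  · have hby : b * y ≠ 0 := mul_ne_zero hb hy
    have hQ : Q = ((b*y)⁻¹ * -(a*x)) • P := by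
      have h : (b*y) • Q = -((a*x) • P) := by
        rw [eq_neg_iff_add_eq_zero, add_comm]; exact h1
      rw [← neg_smul] at h
      calc Q = (b*y)⁻¹ • ((b*y) • Q) := by rw [smul_smul, inv_mul_cancel₀ hby, one_smul]
        _ = ((b*y)⁻¹ * -(a*x)) • P := by rw [h, smul_smul]
    rw [hQ, smul_smul] at h2 h3
    rw [← add_smul] at h2 h3
    set k := a*z + b*w*((b*y)⁻¹ * -(a*x)) with hk
    by_cases hk0 : k = 0
    · rw [hk0, zero_smul] at h2
      exact absurd h2.symm one_ne_zero_M2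
    · have hP : P = k⁻¹ • (1 : M2) := by
        rw [← h2, smul_smul, inv_mul_cancel₀ hk0, one_smul]
      refine ⟨(g*x + d*y*((b*y)⁻¹ * -(a*x))) * k⁻¹, ?_⟩
      rw [← h3, hP, smul_smul]

lemma key2 (P Q : M2) (hPQ : ¬ ∃ c c' : ℂ, P = c • (1:M2) ∧ Q = c' • (1:M2))
    (e u v x y z w : ℂ) (hy : y ≠ 0)
    (h1 : (e*u*x) • P + (e*v*y) • Q = 0)
    (h2 : (e*u*z) • P + (e*v*w) • Q = 1) : u = 0 ∨ v = 0 := by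
  by_contra hc
  push_neg at hc
  obtain ⟨hu, hv⟩ := hc
  by_cases he : e = 0
  · rw [he] at h2; simp only [zero_mul, zero_smul, add_zero, zero_add] at h2
    exact absurd h2.symm one_ne_zero_M2
  · have hevy : e*v*y ≠ 0 := mul_ne_zero (mul_ne_zero he hv) hy
    have hQ : Q = ((e*v*y)⁻¹ * -(e*u*x)) • P := by
      have h : (e*v*y) • Q = -((e*u*x) • P) := by
        rw [eq_neg_iff_add_eq_zero, add_comm]; exact h1
      rw [← neg_smul] at h
      calc Q = (e*v*y)⁻¹ • ((e*v*y) • Q) := by rw [smul_smul, inv_mul_cancel₀ hevy, one_smul]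
        _ = ((e*v*y)⁻¹ * -(e*u*x)) • P := by rw [h, smul_smul]
    rw [hQ, smul_smul, ← add_smul] at h2
    set k := e*u*z + e*v*w*((e*v*y)⁻¹ * -(e*u*x)) with hk
    by_cases hk0 : k = 0
    · rw [hk0, zero_smul] at h2
      exact absurd h2.symm one_ne_zero_M2
    · have hP : P = k⁻¹ • (1 : M2) := by
        rw [← h2, smul_smul, inv_mul_cancel₀ hk0, one_smul]
      exact hPQ ⟨k⁻¹, (e*v*y)⁻¹ * -(e*u*x) * k⁻¹, hP, by rw [hQ, hP, smul_smul]⟩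

lemma X_mem : X ∈ Matrix.unitaryGroup (Fin 2) ℂ := by
  rw [Matrix.mem_unitaryGroup_iff]
  ext i j
  fin_cases i <;> fin_cases j <;>
    simp [X, Matrix.mul_apply, Fin.sum_univ_succ, Matrix.conjTranspose_apply, Matrix.one_apply]

lemma pair_not_scalar (D B₁ : M2) (hD : D ∈ Matrix.unitaryGroup (Fin 2) ℂ)
    (hB₁ : B₁ ∈ Matrix.unitaryGroup (Fin 2) ℂ) :
    ¬ ∃ c c' : ℂ, D * B₁ = c • (1:M2) ∧ D * X * B₁ = c' • (1:M2) := by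
  rintro ⟨c, c', hc, hc'⟩
  have hDD : Dᴴ * D = 1 := Matrix.mem_unitaryGroup_iff'.mp hD
  have hB : B₁ = c • Dᴴ := by
    calc B₁ = (Dᴴ * D) * B₁ := by rw [hDD, one_mul]
      _ = Dᴴ * (D * B₁) := by rw [mul_assoc]
      _ = Dᴴ * (c • 1) := by rw [hc]
      _ = c • Dᴴ := by rw [mul_smul_comm, mul_one]
  have hc0 : c ≠ 0 := by
    intro h
    rw [h, zero_smul] at hB
    have hBB : B₁ᴴ * B₁ = 1 := Matrix.mem_unitaryGroup_iff'.mp hB₁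
    rw [hB, mul_zero] at hBB
    exact one_ne_zero_M2 hBB.symm
  have hX : c • (D * X * Dᴴ) = c' • 1 := by
    calc c • (D * X * Dᴴ) = D * X * (c • Dᴴ) := by rw [mul_smul_comm]
      _ = D * X * B₁ := by rw [← hB]
      _ = c' • 1 := hc'
  have hX2 : D * X * Dᴴ = (c⁻¹ * c') • 1 := by
    calc D * X * Dᴴ = c⁻¹ • (c • (D * X * Dᴴ)) := by rw [smul_smul, inv_mul_cancel₀ hc0, one_smul]
      _ = c⁻¹ • (c' • (1:M2)) := by rw [hX]
      _ = (c⁻¹ * c') • 1 := by rw [smul_smul]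
  have hX3 : X = (c⁻¹ * c') • (1:M2) := by
    calc X = (Dᴴ * D) * X * (Dᴴ * D) := by rw [hDD, one_mul, mul_one]
      _ = Dᴴ * (D * X * Dᴴ) * D := by noncomm_ring
      _ = Dᴴ * ((c⁻¹ * c') • 1) * D := by rw [hX2]
      _ = (c⁻¹ * c') • (Dᴴ * D) := by rw [mul_smul_comm, mul_one, smul_mul_assoc]
      _ = (c⁻¹ * c') • 1 := by rw [hDD]
  have := congrFun (congrFun hX3 0) 1
  simp [X, Matrix.one_apply] at this

lemma unitary_entries {A : M2} (hA : A ∈ Matrix.unitaryGroup (Fin 2) ℂ) :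
    (A 0 0 = 0 ↔ A 1 1 = 0) ∧ (A 0 1 = 0 ↔ A 1 0 = 0) := by
  have h1 : Aᴴ * A = 1 := Matrix.mem_unitaryGroup_iff'.mp hA
  have h2 : A * Aᴴ = 1 := Matrix.mem_unitaryGroup_iff.mp hA
  have r1 := congrFun (congrFun h1 0) 0
  have r2 := congrFun (congrFun h1 0) 1
  have r3 := congrFun (congrFun h1 1) 1
  have s2 := congrFun (congrFun h2 0) 1
  have s3 := congrFun (congrFun h2 1) 1
  simp only [Matrix.mul_apply, Fin.sum_univ_succ, Fin.sum_univ_zero, add_zero,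
    Matrix.conjTranspose_apply, Matrix.one_apply] at r1 r2 r3 s2 s3
  norm_num at r1 r2 r3 s2 s3
  refine ⟨⟨fun h => ?_, fun h => ?_⟩, ⟨fun h => ?_, fun h => ?_⟩⟩
  · rw [h] at r1 r2; simp at r1 r2
    rcases r2 with h' | h'
    · rw [h'] at r1; simp at r1
    · exact h'
  · rw [h] at s2 s3; simp at s2 s3
    rcases s2 with h' | h'
    · exact h'
    · rw [h'] at s3; simp at s3
  · rw [h] at r2 r3; simp at r2 r3
    rcases r2 with h' | h'
    · exact h'
    · rw [h'] at r3; simp at r3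
  · rw [h] at s2 s3; simp at s2 s3
    rcases s2 with h' | h'
    · exact h'
    · rw [h'] at s3; simp at s3

lemma e0_00 : e0 0 0 = 1 := by norm_num [e0]
lemma e0_01 : e0 0 1 = 0 := by norm_num [e0]
lemma e0_11 : e0 1 1 = 0 := by norm_num [e0]
lemma e1_00 : e1 0 0 = 0 := by norm_num [e1]
lemma e1_01 : e1 0 1 = 0 := by norm_num [e1]
lemma e1_11 : e1 1 1 = 1 := by norm_num [e1]

/-- In a two-CNOT realization of a controlled-U gate with U not a multiple of the
identity, if A₁ is not sparse then neither A₂ nor A₃ is sparse. -/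
theorem not_sparse_propagates (U A₁ A₂ A₃ B₁ B₂ B₃ : Matrix (Fin 2) (Fin 2) ℂ)
    (hU : U ∈ Matrix.unitaryGroup (Fin 2) ℂ)
    (hUni : ¬ ∃ c : ℂ, U = c • (1 : Matrix (Fin 2) (Fin 2) ℂ))
    (hA₁ : A₁ ∈ Matrix.unitaryGroup (Fin 2) ℂ) (hA₂ : A₂ ∈ Matrix.unitaryGroup (Fin 2) ℂ)
    (hA₃ : A₃ ∈ Matrix.unitaryGroup (Fin 2) ℂ) (hB₁ : B₁ ∈ Matrix.unitaryGroup (Fin 2) ℂ)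
    (hB₂ : B₂ ∈ Matrix.unitaryGroup (Fin 2) ℂ) (hB₃ : B₃ ∈ Matrix.unitaryGroup (Fin 2) ℂ)
    (hcirc : (A₃ ⊗ₖ B₃) * CNOT * (A₂ ⊗ₖ B₂) * CNOT * (A₁ ⊗ₖ B₁) = CU U)
    (hsp : ¬ Sparse A₁) : ¬ Sparse A₂ ∧ ¬ Sparse A₃ := by
  obtain ⟨iff1, iff2⟩ := unitary_entries hA₁
  have h01 : A₁ 0 1 ≠ 0 := fun h => hsp (Or.inl ⟨h, iff2.mp h⟩)
  have h10 : A₁ 1 0 ≠ 0 := fun h => hsp (Or.inl ⟨iff2.mpr h, h⟩)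
  have h00 : A₁ 0 0 ≠ 0 := fun h => hsp (Or.inr ⟨h, iff1.mp h⟩)
  have h11 : A₁ 1 1 ≠ 0 := fun h => hsp (Or.inr ⟨iff1.mpr h, h⟩)
  have lem1 : ¬ Sparse A₂ := by
    rintro (⟨hd1, hd2⟩ | ⟨ha1, ha2⟩)
    · have m01 := master U A₁ A₂ A₃ B₁ B₂ B₃ hcirc 0 1
      have m00 := master U A₁ A₂ A₃ B₁ B₂ B₃ hcirc 0 0
      have m11 := master U A₁ A₂ A₃ B₁ B₂ B₃ hcirc 1 1
      rw [hd1, hd2, e0_01, e1_01] at m01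
      rw [hd1, hd2, e0_00, e1_00] at m00
      rw [hd1, hd2, e0_11, e1_11] at m11
      simp only [mul_zero, zero_mul, zero_smul, add_zero, zero_add, one_smul] at m01 m00 m11
      exact hUni (key1 (B₃*B₂*B₁) (B₃*X*B₂*X*B₁) U
        (A₃ 0 0 * A₂ 0 0) (A₃ 0 1 * A₂ 1 1) (A₃ 1 0 * A₂ 0 0) (A₃ 1 1 * A₂ 1 1)
        (A₁ 0 1) (A₁ 1 1) (A₁ 0 0) (A₁ 1 0) h01 h11 m01 m00 m11)
    · have m01 := master U A₁ A₂ A₃ B₁ B₂ B₃ hcirc 0 1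
      have m00 := master U A₁ A₂ A₃ B₁ B₂ B₃ hcirc 0 0
      have m11 := master U A₁ A₂ A₃ B₁ B₂ B₃ hcirc 1 1
      rw [ha1, ha2, e0_01, e1_01] at m01
      rw [ha1, ha2, e0_00, e1_00] at m00
      rw [ha1, ha2, e0_11, e1_11] at m11
      simp only [mul_zero, zero_mul, zero_smul, add_zero, zero_add, one_smul] at m01 m00 m11
      exact hUni (key1 (B₃*B₂*X*B₁) (B₃*X*B₂*B₁) U
        (A₃ 0 0 * A₂ 0 1) (A₃ 0 1 * A₂ 1 0) (A₃ 1 0 * A₂ 0 1) (A₃ 1 1 * A₂ 1 0)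
        (A₁ 1 1) (A₁ 0 1) (A₁ 1 0) (A₁ 0 0) h11 h01 m01 m00 m11)
  refine ⟨lem1, ?_⟩
  rintro (⟨hd1, hd2⟩ | ⟨ha1, ha2⟩)
  · have m01 := master U A₁ A₂ A₃ B₁ B₂ B₃ hcirc 0 1
    have m00 := master U A₁ A₂ A₃ B₁ B₂ B₃ hcirc 0 0
    rw [hd1, e0_01, e1_01] at m01
    rw [hd1, e0_00, e1_00] at m00
    simp only [mul_zero, zero_mul, zero_smul, add_zero, zero_add, one_smul] at m01 m00
    have hkey := key2 (B₃*B₂*B₁) (B₃*B₂*X*B₁)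
      (pair_not_scalar (B₃*B₂) B₁ (mul_mem hB₃ hB₂) hB₁)
      (A₃ 0 0) (A₂ 0 0) (A₂ 0 1) (A₁ 0 1) (A₁ 1 1) (A₁ 0 0) (A₁ 1 0) h11 m01 m00
    obtain ⟨iffA1, iffA2⟩ := unitary_entries hA₂
    rcases hkey with h | h
    · exact lem1 (Or.inr ⟨h, iffA1.mp h⟩)
    · exact lem1 (Or.inl ⟨h, iffA2.mp h⟩)
  · have m01 := master U A₁ A₂ A₃ B₁ B₂ B₃ hcirc 0 1
    have m00 := master U A₁ A₂ A₃ B₁ B₂ B₃ hcirc 0 0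
    rw [ha1, e0_01, e1_01] at m01
    rw [ha1, e0_00, e1_00] at m00
    simp only [mul_zero, zero_mul, zero_smul, add_zero, zero_add, one_smul] at m01 m00
    have hkey := key2 (B₃*X*B₂*B₁) (B₃*X*B₂*X*B₁)
      (pair_not_scalar (B₃*X*B₂) B₁ (mul_mem (mul_mem hB₃ X_mem) hB₂) hB₁)
      (A₃ 0 1) (A₂ 1 0) (A₂ 1 1) (A₁ 0 1) (A₁ 1 1) (A₁ 0 0) (A₁ 1 0) h11 m01 m00
    obtain ⟨iffA1, iffA2⟩ := unitary_entries hA₂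
    rcases hkey with h | h
    · exact lem1 (Or.inl ⟨iffA2.mpr h, h⟩)
    · exact lem1 (Or.inr ⟨iffA1.mpr h, h⟩)
end
end

section
/- For the input state |00⟩⊗|φ⟩ + |10⟩⊗|φ⟩ + |11⟩⊗|φ⟩ with any nonzero |φ⟩ ∈ C², the output of the simplified Toffoli gate M is |00⟩⊗|φ⟩ + |10⟩⊗Z|φ⟩ + |11⟩⊗X|φ⟩, and in this output the third (least significant) qubit is entangled with the first two qubits, i.e., the output cannot be written as |χ⟩⊗|η⟩ with |χ⟩ ∈ C⁴ and |η⟩ ∈ C². -/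
open Matrix Kronecker Complex

noncomputable section

/-- The simplified Toffoli gate on three qubits. -/
def M : Matrix (Fin 2 × Fin 2 × Fin 2) (Fin 2 × Fin 2 × Fin 2) ℂ :=
  e0 ⊗ₖ (e0 ⊗ₖ 1) + e0 ⊗ₖ (e1 ⊗ₖ 1) + e1 ⊗ₖ (e0 ⊗ₖ Z) + e1 ⊗ₖ (e1 ⊗ₖ X)

/-- Tensor product of three single-qubit state vectors. -/
def t3 (u v w : Fin 2 → ℂ) : Fin 2 × Fin 2 × Fin 2 → ℂ :=
  fun p => u p.1 * v p.2.1 * w p.2.2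

def b0 : Fin 2 → ℂ := ![1, 0]
def b1 : Fin 2 → ℂ := ![0, 1]

/-- On the input |00⟩⊗|φ⟩ + |10⟩⊗|φ⟩ + |11⟩⊗|φ⟩ the gate M produces
|00⟩⊗|φ⟩ + |10⟩⊗Z|φ⟩ + |11⟩⊗X|φ⟩, and in this output the least significant
qubit is entangled with the other two. -/
theorem M_entangles_target (φ : Fin 2 → ℂ) (hφ : φ ≠ 0) :
    M.mulVec (t3 b0 b0 φ + t3 b1 b0 φ + t3 b1 b1 φ) =
      t3 b0 b0 φ + t3 b1 b0 (Z.mulVec φ) + t3 b1 b1 (X.mulVec φ) ∧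
    ¬ ∃ (χ : Fin 2 × Fin 2 → ℂ) (η : Fin 2 → ℂ),
        M.mulVec (t3 b0 b0 φ + t3 b1 b0 φ + t3 b1 b1 φ) =
          fun p => χ (p.1, p.2.1) * η p.2.2 := by
  have hmain : M.mulVec (t3 b0 b0 φ + t3 b1 b0 φ + t3 b1 b1 φ) =
      t3 b0 b0 φ + t3 b1 b0 (Z.mulVec φ) + t3 b1 b1 (X.mulVec φ) := by
    funext p
    rcases p with ⟨i, j, k⟩
    fin_cases i <;> fin_cases j <;> fin_cases k <;>
      simp [M, mulVec, dotProduct, Fintype.sum_prod_type, Fin.sum_univ_succ,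
        t3, b0, b1, X, Z, e0, e1, kroneckerMap_apply, Matrix.one_apply]
  refine ⟨hmain, ?_⟩
  rintro ⟨χ, η, h⟩
  rw [hmain] at h
  have hv : ∀ i j k, (t3 b0 b0 φ + t3 b1 b0 (Z.mulVec φ) + t3 b1 b1 (X.mulVec φ))
      (i, j, k) = χ (i, j) * η k := fun i j k => congrFun h (i, j, k)
  have h00 : χ (0,0) * η 0 = φ 0 := by
    have := hv 0 0 0
    simp [t3, b0, b1, Z, X, mulVec, dotProduct, Fin.sum_univ_succ] at this
    linear_combination -this
  have h01 : χ (0,0) * η 1 = φ 1 := by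
    have := hv 0 0 1
    simp [t3, b0, b1, Z, X, mulVec, dotProduct, Fin.sum_univ_succ] at this
    linear_combination -this
  have h10 : χ (1,0) * η 0 = φ 0 := by
    have := hv 1 0 0
    simp [t3, b0, b1, Z, X, mulVec, dotProduct, Fin.sum_univ_succ] at this
    linear_combination -this
  have h11 : χ (1,0) * η 1 = -φ 1 := by
    have := hv 1 0 1
    simp [t3, b0, b1, Z, X, mulVec, dotProduct, Fin.sum_univ_succ] at this
    linear_combination -this
  have h20 : χ (1,1) * η 0 = φ 1 := by
    have := hv 1 1 0
    simp [t3, b0, b1, Z, X, mulVec, dotProduct, Fin.sum_univ_succ] at this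
    linear_combination -this
  have h21 : χ (1,1) * η 1 = φ 0 := by
    have := hv 1 1 1
    simp [t3, b0, b1, Z, X, mulVec, dotProduct, Fin.sum_univ_succ] at this
    linear_combination -this
  have key1 : φ 0 * φ 1 = 0 := by
    have e1 : φ 0 * φ 1 = χ (0,0) * χ (1,0) * (η 0 * η 1) := by
      rw [← h10, ← h01]; ring
    have e2 : φ 0 * (-φ 1) = χ (0,0) * χ (1,0) * (η 0 * η 1) := by
      rw [← h00, ← h11]; ring
    have h := e1.trans e2.symm
    linear_combination h / 2
  have key2 : φ 1 * φ 1 = φ 0 * φ 0 := by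
    have e1 : φ 1 * φ 1 = χ (0,0) * χ (1,1) * (η 0 * η 1) := by
      linear_combination (-(χ (0,0) * η 1)) * h20 - φ 1 * h01
    have e2 : φ 0 * φ 0 = χ (0,0) * χ (1,1) * (η 0 * η 1) := by
      linear_combination (-(χ (0,0) * η 0)) * h21 - φ 0 * h00
    exact e1.trans e2.symm
  have h0 : φ 0 = 0 ∧ φ 1 = 0 := by
    rcases mul_eq_zero.mp key1 with h | h
    · have : φ 1 * φ 1 = 0 := by rw [key2, h, mul_zero]
      exact ⟨h, by simpa using mul_self_eq_zero.mp this⟩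
    · have : φ 0 * φ 0 = 0 := by rw [← key2, h, mul_zero]
      exact ⟨by simpa using mul_self_eq_zero.mp this, h⟩
  apply hφ
  funext i
  fin_cases i
  · exact h0.1
  · exact h0.2
end
end
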